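/- arXiv:math/0503198 — 2 statements merged into one kernel-verified Lean document; each statement's English description precedes it below -/
import Mathlib

section
/- Define numbers f_k for k ∈ ℤ (univariate case M = 1) by f_0 = -4, f_k = 0 for k < 0, and for k ≥ 1 by the recursion γ_{k-1} f_{k-1} + Σ_{l=0}^{k} f_l f_{k-l} = 0, where γ_k = -1/2 + (3/2)k. Then f_k > 0 for all k ≥ 1. -/
theorem excursion_moment_amplitudes_pos_univariate (f : ℕ → ℝ)
    (h0 : f 0 = -4)
    (hrec : ∀ k : ℕ, 1 ≤ k →
      (-(1 / 2 : ℝ) + 3 / 2 * (k - 1 : ℕ)) * f (k - 1) +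
        ∑ l ∈ Finset.range (k + 1), f l * f (k - l) = 0) :
    ∀ k : ℕ, 1 ≤ k → 0 < f k := by
  intro k
  induction k using Nat.strong_induction_on with
  | _ k ih =>
    intro hk
    match k, hk with
    | 1, _ =>
      have h := hrec 1 le_rfl
      simp [Finset.sum_range_succ, h0] at h
      linarith
    | (n+2), _ =>
      have h := hrec (n+2) (by omega)
      have hm : (n + 2 - 1 : ℕ) = n + 1 := rfl
      rw [hm] at h
      rw [Finset.sum_range_succ', Finset.sum_range_succ] at h
      have hsimp : ∀ i, i ∈ Finset.range (n+1) →
          f (i+1) * f (n + 2 - (i+1)) = f (i+1) * f (n + 1 - i) := by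
        intro i _
        congr 2
        omega
      rw [Finset.sum_congr rfl hsimp] at h
      have hS : 0 < ∑ i ∈ Finset.range (n+1), f (i+1) * f (n + 1 - i) := by
        apply Finset.sum_pos
        · intro i hi
          simp only [Finset.mem_range] at hi
          have h1 : 0 < f (i+1) := ih (i+1) (by omega) (by omega)
          have h2 : 0 < f (n+1-i) := ih (n+1-i) (by omega) (by omega)
          positivity
        · exact ⟨0, Finset.mem_range.mpr (by omega)⟩
      have hγ : (0:ℝ) < -(1 / 2) + 3 / 2 * ((n+1 : ℕ) : ℝ) := by
        push_cast; nlinarith [Nat.cast_nonneg (α := ℝ) n]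
      have hf : 0 < f (n+1) := ih (n+1) (by omega) (by omega)
      have hsub : (n + 2 - 0 : ℕ) = n + 2 := rfl
      have hsub2 : (n + 2 - (n+1+1) : ℕ) = 0 := by omega
      rw [hsub, hsub2, h0] at h
      nlinarith [mul_pos hγ hf]
end

section
/- Majorant lemma: let g, h ∈ ℝ[[x₁,...,x_M]] be formal power series with g ≪ h, meaning |g_k| ≤ |k|!·h_k for all k ∈ ℕ^M (in particular h has nonnegative coefficients). Then g² ≪ h², x₁·g ≪ x₁·h, x₁·xᵢ·∂g/∂xᵢ ≪ x₁·h for each i, and x_{j+1}·∂g/∂x_j ≪ x_{j+1}·∂h/∂x_j for each j < M. -/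
/-- `g ≪ h` for coefficient families of formal power series in `M` variables:
`|g_k| ≤ |k|! · h_k` for all multi-indices `k`. -/
def Majorizes {M : ℕ} (g h : (Fin M → ℕ) → ℝ) : Prop :=
  ∀ k : Fin M → ℕ, |g k| ≤ ((∑ i, k i).factorial : ℝ) * h k

/-- Coefficient of `x^k` in the Cauchy product of two formal power series in `M`
variables given by their coefficient families. -/
noncomputable def convCoeff {M : ℕ} (g g' : (Fin M → ℕ) → ℝ) (k : Fin M → ℕ) : ℝ :=
  ∑ l ∈ Fintype.piFinset (fun i => Finset.range (k i + 1)), g l * g' (fun i => k i - l i)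

/-- The `i`-th unit multi-index. -/
def unitVec {M : ℕ} (i : Fin M) : Fin M → ℕ := fun j => if j = i then 1 else 0

theorem majorant_lemma (M : ℕ) (g h : (Fin M → ℕ) → ℝ) (hgh : Majorizes g h) :
    -- g² ≪ h²
    Majorizes (convCoeff g g) (convCoeff h h) ∧
    -- x₁·g ≪ x₁·h : the coefficient of x₁·g at index k + e₁ is g k, that of x₁·h is h k
    (∀ k : Fin M → ℕ, |g k| ≤ (((∑ i, k i) + 1).factorial : ℝ) * h k) ∧
    -- x₁·xᵢ·∂g/∂xᵢ ≪ x₁·h : the coefficient of x₁·xᵢ·∂g/∂xᵢ at index k + e₁ is kᵢ·g k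
    (∀ i : Fin M, ∀ k : Fin M → ℕ,
      |(k i : ℝ) * g k| ≤ (((∑ i, k i) + 1).factorial : ℝ) * h k) ∧
    -- x_{j+1}·∂g/∂x_j ≪ x_{j+1}·∂h/∂x_j : the coefficient at index k + e_{j+1} is
    -- (k_j + 1)·g_{k + e_j}, resp. (k_j + 1)·h_{k + e_j}
    (∀ j : Fin M, ∀ hj : (j : ℕ) + 1 < M, ∀ k : Fin M → ℕ,
      |((k j : ℝ) + 1) * g (fun i => k i + unitVec j i)| ≤
        (((∑ i, k i) + 1).factorial : ℝ) * (((k j : ℝ) + 1) * h (fun i => k i + unitVec j i))) := by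
  have hpos : ∀ k : Fin M → ℕ, (0 : ℝ) ≤ h k := by
    intro k
    have h1 : (0 : ℝ) ≤ ((∑ i, k i).factorial : ℝ) * h k := (abs_nonneg _).trans (hgh k)
    have h2 : (0 : ℝ) < ((∑ i, k i).factorial : ℝ) := by
      exact_mod_cast Nat.factorial_pos _
    nlinarith
  refine ⟨?_, ?_, ?_, ?_⟩
  · -- convolution part
    intro k
    calc |convCoeff g g k|
        ≤ ∑ l ∈ Fintype.piFinset (fun i => Finset.range (k i + 1)),
            |g l * g (fun i => k i - l i)| := Finset.abs_sum_le_sum_abs _ _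
      _ ≤ ∑ l ∈ Fintype.piFinset (fun i => Finset.range (k i + 1)),
            ((∑ i, k i).factorial : ℝ) * (h l * h (fun i => k i - l i)) := by
          apply Finset.sum_le_sum
          intro l hl
          have hle : ∀ i, l i ≤ k i := by
            intro i
            have := Finset.mem_range.mp ((Fintype.mem_piFinset.mp hl) i)
            omega
          have hsum : (∑ i, l i) + (∑ i, (k i - l i)) = ∑ i, k i := by
            rw [← Finset.sum_add_distrib]
            exact Finset.sum_congr rfl fun i _ => by have := hle i; omega
          have hfac : ((∑ i, l i).factorial : ℝ) * ((∑ i, (k i - l i)).factorial : ℝ)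
              ≤ ((∑ i, k i).factorial : ℝ) := by
            have := Nat.factorial_mul_factorial_dvd_factorial_add (∑ i, l i) (∑ i, (k i - l i))
            rw [hsum] at this
            exact_mod_cast Nat.le_of_dvd (Nat.factorial_pos _) this
          rw [abs_mul]
          calc |g l| * |g (fun i => k i - l i)|
              ≤ (((∑ i, l i).factorial : ℝ) * h l) *
                (((∑ i, (k i - l i)).factorial : ℝ) * h (fun i => k i - l i)) := by
                exact mul_le_mul (hgh l) (hgh _) (abs_nonneg _)
                  (mul_nonneg (by positivity) (hpos _))
            _ = (((∑ i, l i).factorial : ℝ) * ((∑ i, (k i - l i)).factorial : ℝ)) *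
                (h l * h (fun i => k i - l i)) := by ring
            _ ≤ ((∑ i, k i).factorial : ℝ) * (h l * h (fun i => k i - l i)) := by
                apply mul_le_mul_of_nonneg_right hfac
                exact mul_nonneg (hpos _) (hpos _)
      _ = ((∑ i, k i).factorial : ℝ) * convCoeff h h k := by
          rw [convCoeff, Finset.mul_sum]
  · intro k
    refine (hgh k).trans (mul_le_mul_of_nonneg_right ?_ (hpos k))
    exact_mod_cast Nat.factorial_le (Nat.le_succ _)
  · intro i k
    rw [abs_mul, abs_of_nonneg (by positivity : (0:ℝ) ≤ (k i : ℝ))]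
    have hki : (k i : ℝ) ≤ ((∑ j, k j : ℕ) + 1 : ℕ) := by
      have : k i ≤ ∑ j, k j := Finset.single_le_sum (fun j _ => Nat.zero_le _) (Finset.mem_univ i)
      exact_mod_cast this.trans (Nat.le_succ _)
    calc (k i : ℝ) * |g k| ≤ (k i : ℝ) * (((∑ j, k j).factorial : ℝ) * h k) :=
          mul_le_mul_of_nonneg_left (hgh k) (by positivity)
      _ ≤ (((∑ j, k j) + 1 : ℕ) : ℝ) * (((∑ j, k j).factorial : ℝ) * h k) :=
          mul_le_mul_of_nonneg_right hki (mul_nonneg (by positivity) (hpos k))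
      _ = (((∑ j, k j) + 1).factorial : ℝ) * h k := by
          rw [Nat.factorial_succ]; push_cast; ring
  · intro j hj k
    set k' : Fin M → ℕ := fun i => k i + unitVec j i with hk'
    have hs : ∑ i, k' i = (∑ i, k i) + 1 := by
      rw [hk']
      simp only [Finset.sum_add_distrib]
      congr 1
      simp [unitVec]
    rw [abs_mul, abs_of_nonneg (by positivity : (0:ℝ) ≤ (k j : ℝ) + 1)]
    have := hgh k'
    rw [hs] at this
    calc ((k j : ℝ) + 1) * |g k'| ≤ ((k j : ℝ) + 1) * ((((∑ i, k i) + 1).factorial : ℝ) * h k') :=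
          mul_le_mul_of_nonneg_left this (by positivity)
      _ = (((∑ i, k i) + 1).factorial : ℝ) * (((k j : ℝ) + 1) * h k') := by ring
end
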